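/- arXiv:2211.02198 — 8 statements merged into one kernel-verified Lean document; each statement's English description precedes it below -/
import Mathlib

section
/- Let p be a prime, d ≥ 1, t a prime, and e a divisor of d with e ≥ 2 such that p^d − 1 = t·(p^{d/e} − 1). Then e is prime. -/
/-- If `p`, `t` are primes, `e ∣ d`, `e ≥ 2` and `p^d - 1 = t * (p^(d/e) - 1)`,
then `e` is prime. -/
theorem stmt_1 (p d t e : ℕ) (hp : p.Prime) (hd : 1 ≤ d) (ht : t.Prime)
    (he2 : 2 ≤ e) (hed : e ∣ d)
    (heq : p ^ d - 1 = t * (p ^ (d / e) - 1)) :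
    e.Prime := by
  by_contra hne
  obtain ⟨f, hf_dvd, hf1, hfe⟩ := Nat.exists_dvd_of_not_prime2 he2 hne
  obtain ⟨g, hg⟩ := hf_dvd
  obtain ⟨m, hm⟩ := hed
  have hp2 : 2 ≤ p := hp.two_le
  have hm1 : 1 ≤ m := by
    rcases Nat.eq_zero_or_pos m with h | h
    · subst h; omega
    · exact h
  have hg2 : 2 ≤ g := by nlinarith
  have hde : d / e = m := by
    rw [hm]; exact Nat.mul_div_cancel_left m (by omega)
  rw [hde] at heq
  have key : ∀ a b : ℕ, a ∣ b → p ^ a - 1 ∣ p ^ b - 1 := by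
    rintro a b ⟨c, rfl⟩
    rw [pow_mul]
    simpa using Nat.sub_dvd_pow_sub_pow (p ^ a) 1 c
  obtain ⟨A, hA⟩ := key m (g * m) ⟨g, (mul_comm g m)⟩
  obtain ⟨B, hB⟩ := key (g * m) d (⟨f, by rw [hm, hg]; ring⟩)
  -- monotonicity facts
  have hmono : ∀ a b : ℕ, a < b → p ^ a < p ^ b := fun a b h =>
    Nat.pow_lt_pow_right (by omega) h
  have h1 : p ^ m < p ^ (g * m) := hmono _ _ (by nlinarith)
  have h2 : p ^ (g * m) < p ^ d := hmono _ _ (by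
    rw [hm, hg]
    have h := Nat.mul_le_mul_right (g * m) hf1
    have : f * g * m = f * (g * m) := by ring
    have hgm : 1 * 1 ≤ g * m := Nat.mul_le_mul (by omega) hm1
    omega)
  have hpm1 : 1 ≤ p ^ m := Nat.one_le_pow _ _ (by omega)
  have hpg1 : 1 ≤ p ^ (g * m) := Nat.one_le_pow _ _ (by omega)
  have hpm2 : 1 < p ^ m := Nat.one_lt_pow (by omega) (by omega)
  have hA2 : 2 ≤ A := by
    rcases Nat.lt_or_ge A 2 with h | h
    · interval_cases A <;> omega
    · exact h
  have hB2 : 2 ≤ B := by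
    rcases Nat.lt_or_ge B 2 with h | h
    · interval_cases B <;> omega
    · exact h
  have htBA : t = B * A := by
    have h3 : t * (p ^ m - 1) = (B * A) * (p ^ m - 1) := by
      rw [← heq, hB, hA]; ring
    exact Nat.eq_of_mul_eq_mul_right (by omega) h3
  have : (B * A).Prime := htBA ▸ ht
  rcases Nat.prime_mul_iff.mp this with ⟨hx, hy⟩ | ⟨hx, hy⟩ <;> omega
end

section
/- Let G ≤ Sym(Ω) be a permutation group with Property (★): for all u, v, w ∈ Ω with u ≠ w, if G_{uv} ≤ G_w then G_{uw} ≤ G_v. For u ≠ v define Λ_{uv} = {w ∈ Ω : G_{uv} ≤ G_w}. Then for any w ∈ Λ_{uv} with w ≠ u, one has Λ_{uv} = Λ_{uw}. -/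
/-- The "line" `Λ_{uv}`: the set of points fixed by everything in the
two-point stabiliser `G_{uv} = G_u ∩ G_v`. -/
def lineThrough {Ω : Type*} (G : Subgroup (Equiv.Perm Ω)) (u v : Ω) : Set Ω :=
  {w : Ω | MulAction.stabilizer G u ⊓ MulAction.stabilizer G v ≤ MulAction.stabilizer G w}

/-- If `G` has Property (★) and `w ∈ Λ_{uv}` with `w ≠ u`, then `Λ_{uv} = Λ_{uw}`. -/
theorem stmt_7 {Ω : Type*} (G : Subgroup (Equiv.Perm Ω))
    (hstar : ∀ u v w : Ω, u ≠ w →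
      MulAction.stabilizer G u ⊓ MulAction.stabilizer G v ≤ MulAction.stabilizer G w →
      MulAction.stabilizer G u ⊓ MulAction.stabilizer G w ≤ MulAction.stabilizer G v)
    (u v w : Ω) (huv : u ≠ v) (hw : w ∈ lineThrough G u v) (hwu : w ≠ u) :
    lineThrough G u v = lineThrough G u w := by
  have h1 : MulAction.stabilizer G u ⊓ MulAction.stabilizer G w ≤ MulAction.stabilizer G v :=
    hstar u v w hwu.symm hw
  have key : MulAction.stabilizer G u ⊓ MulAction.stabilizer G v =
      MulAction.stabilizer G u ⊓ MulAction.stabilizer G w :=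
    le_antisymm (le_inf inf_le_left hw) (le_inf inf_le_left h1)
  ext x
  simp only [lineThrough, Set.mem_setOf_eq, key]
end

section
/- Let G ≤ Sym(Ω) have Property (★): for all u, v, w ∈ Ω with u ≠ w, G_{uv} ≤ G_w implies G_{uw} ≤ G_v. For distinct u, v define Λ_{uv} = {w ∈ Ω : G_{uv} ≤ G_w}. Then for all distinct points a, b and all distinct points u, v with u, v ∈ Λ_{ab}, we have Λ_{ab} = Λ_{uv}. Consequently, every pair of distinct points of Ω lies in exactly one set of the form Λ_{uv}, i.e. these sets are the lines of a linear space on Ω. -/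
/-- If `G` has Property (★), then distinct points `u, v ∈ Λ_{ab}` satisfy
`Λ_{ab} = Λ_{uv}`; consequently every pair of distinct points lies in exactly one
set of the form `Λ_{uv}`, so these sets are the lines of a linear space. -/
theorem stmt_8 {Ω : Type*} (G : Subgroup (Equiv.Perm Ω))
    (hstar : ∀ u v w : Ω, u ≠ w →
      MulAction.stabilizer G u ⊓ MulAction.stabilizer G v ≤ MulAction.stabilizer G w →
      MulAction.stabilizer G u ⊓ MulAction.stabilizer G w ≤ MulAction.stabilizer G v) :
    (∀ a b u v : Ω, a ≠ b → u ≠ v → u ∈ lineThrough G a b → v ∈ lineThrough G a b →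
      lineThrough G a b = lineThrough G u v) ∧
    (∀ u v : Ω, u ≠ v →
      ∃! ℓ : Set Ω, (∃ x y : Ω, x ≠ y ∧ ℓ = lineThrough G x y) ∧ u ∈ ℓ ∧ v ∈ ℓ) := by
  have L : ∀ x y z : Ω, x ≠ z →
      MulAction.stabilizer G x ⊓ MulAction.stabilizer G y ≤ MulAction.stabilizer G z →
      MulAction.stabilizer G x ⊓ MulAction.stabilizer G z
        = MulAction.stabilizer G x ⊓ MulAction.stabilizer G y := by
    intro x y z hxz h
    exact le_antisymm (le_inf inf_le_left (hstar x y z hxz h)) (le_inf inf_le_left h)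
  have key : ∀ a b u v : Ω, a ≠ b → u ≠ v →
      MulAction.stabilizer G a ⊓ MulAction.stabilizer G b ≤ MulAction.stabilizer G u →
      MulAction.stabilizer G a ⊓ MulAction.stabilizer G b ≤ MulAction.stabilizer G v →
      MulAction.stabilizer G a ⊓ MulAction.stabilizer G b
        = MulAction.stabilizer G u ⊓ MulAction.stabilizer G v := by
    intro a b u v hab huv hu hv
    by_cases hua : u = a
    · subst hua
      exact (L u b v (huv) hv).symm
    · have h1 := L a b u (fun h => hua h.symm) hu
      have h2 : MulAction.stabilizer G u ⊓ MulAction.stabilizer G a ≤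
          MulAction.stabilizer G v := by
        rw [inf_comm, h1]; exact hv
      have h3 := L u a v huv h2
      rw [h3, inf_comm (MulAction.stabilizer (G : Subgroup (Equiv.Perm Ω)) u), h1]
  have part1 : ∀ a b u v : Ω, a ≠ b → u ≠ v → u ∈ lineThrough G a b →
      v ∈ lineThrough G a b → lineThrough G a b = lineThrough G u v := by
    intro a b u v hab huv hu hv
    unfold lineThrough
    rw [key a b u v hab huv hu hv]
  have memL : ∀ x y : Ω, x ∈ lineThrough G x y ∧ y ∈ lineThrough G x y := by
    intro x y
    constructor <;> simp only [lineThrough, Set.mem_setOf_eq]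
    · exact inf_le_left
    · exact inf_le_right
  refine ⟨part1, fun u v huv => ⟨lineThrough G u v,
    ⟨⟨u, v, huv, rfl⟩, (memL u v).1, (memL u v).2⟩, ?_⟩⟩
  rintro ℓ ⟨⟨x, y, hxy, rfl⟩, hu, hv⟩
  exact part1 x y u v hxy huv hu hv
end

section
/- Let G be a transitive permutation group on a set Ω such that for every u ∈ Ω, all the nontrivial orbits of the point stabiliser G_u on Ω \ {u} have the same size. Then G has Property (★): for all u, v, w ∈ Ω with u ≠ w, if G_{uv} ≤ G_w then G_{uw} ≤ G_v. -/
/-- If `G` is a transitive permutation group in which, for every point `u`, all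
orbits of the point stabiliser `G_u` on points different from `u` have the same
size, then `G` has Property (★). -/
theorem stmt_10 {Ω : Type*} [Finite Ω] (G : Subgroup (Equiv.Perm Ω))
    (htrans : MulAction.IsPretransitive G Ω)
    (horb : ∀ u v w : Ω, v ≠ u → w ≠ u →
      Nat.card (MulAction.orbit (MulAction.stabilizer G u) v) =
        Nat.card (MulAction.orbit (MulAction.stabilizer G u) w)) :
    ∀ u v w : Ω, u ≠ w →
      MulAction.stabilizer G u ⊓ MulAction.stabilizer G v ≤ MulAction.stabilizer G w →
      MulAction.stabilizer G u ⊓ MulAction.stabilizer G w ≤ MulAction.stabilizer G v := by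
  intro u v w huw hle
  by_cases hvu : v = u
  · subst hvu
    exact inf_le_left
  -- nontrivial case
  set H := MulAction.stabilizer G u with hH
  cases nonempty_fintype Ω
  have hfinG : Finite G := Subgroup.instFiniteSubtypeMem G
  have hfinH : Finite H := Subgroup.instFiniteSubtypeMem H
  -- identify two-point stabilizers inside H
  have hstab : ∀ x : Ω, MulAction.stabilizer H x
      = (MulAction.stabilizer G x).subgroupOf H := by
    intro x
    ext g
    simp only [MulAction.mem_stabilizer_iff, Subgroup.mem_subgroupOf]
    rfl
  -- cardinalities of the two two-point stabilizers coincide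
  have horb' := horb u v w hvu (Ne.symm huw)
  rw [← hH] at horb'
  have : Fintype H := Fintype.ofFinite H
  have : Fintype (MulAction.orbit H v) := Fintype.ofFinite _
  have : Fintype (MulAction.orbit H w) := Fintype.ofFinite _
  have : Fintype (MulAction.stabilizer H v) := Fintype.ofFinite _
  have : Fintype (MulAction.stabilizer H w) := Fintype.ofFinite _
  have hv := MulAction.card_orbit_mul_card_stabilizer_eq_card_group H v
  have hw := MulAction.card_orbit_mul_card_stabilizer_eq_card_group H w
  simp only [← Nat.card_eq_fintype_card] at hv hw
  have hne : Nonempty (MulAction.orbit H v) := ⟨⟨v, MulAction.mem_orbit_self v⟩⟩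
  have hopos : 0 < Nat.card (MulAction.orbit H v) := Nat.card_pos
  have hcard : Nat.card (MulAction.stabilizer H v) = Nat.card (MulAction.stabilizer H w) := by
    have : Nat.card (MulAction.orbit H v) * Nat.card (MulAction.stabilizer H v)
        = Nat.card (MulAction.orbit H v) * Nat.card (MulAction.stabilizer H w) := by
      rw [hv, horb', hw]
    exact Nat.eq_of_mul_eq_mul_left hopos this
  -- inclusion of two-point stabilizers from the hypothesis
  have hle' : MulAction.stabilizer H v ≤ MulAction.stabilizer H w := by
    intro g hg
    rw [hstab] at hg ⊢
    rw [Subgroup.mem_subgroupOf] at hg ⊢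
    exact hle ⟨g.2, hg⟩
  have heq : MulAction.stabilizer H v = MulAction.stabilizer H w :=
    Subgroup.eq_of_le_of_card_ge hle' (le_of_eq hcard.symm)
  -- conclude
  intro g hg
  obtain ⟨hgu, hgw⟩ := hg
  have : (⟨g, hgu⟩ : H) ∈ MulAction.stabilizer H w := by
    rw [hstab, Subgroup.mem_subgroupOf]
    exact hgw
  rw [← heq, hstab, Subgroup.mem_subgroupOf] at this
  exact this
end

section
/- Let G ≤ Sym(Ω), let u ≠ v be points of Ω, and set ℓ = {w ∈ Ω : G_{uv} ≤ G_w}. Then: (1) the pointwise stabiliser of ℓ in G equals G_{uv}; (2) the setwise stabiliser of ℓ in G equals the normaliser N_G(G_{uv}); (3) the permutation group induced by the setwise stabiliser of ℓ on ℓ is isomorphic to N_G(G_{uv})/G_{uv}. -/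
/-!
Write `H = G_u ∩ G_v`, the pointwise stabiliser of `{u, v}`, so that `ℓ` is the fixed-point set of
`H`. Since `{u, v} ⊆ ℓ`, the pointwise stabiliser of `ℓ` lies in `H`, and it contains `H` by the
definition of `ℓ`. A setwise stabiliser of any set normalises its pointwise stabiliser, and
conversely the normaliser of `H` permutes the fixed points of `H`. Part (3) is the first
isomorphism theorem for restriction to `ℓ`, whose kernel is the pointwise stabiliser of `ℓ`.
-/

open Pointwise

def inducedPerm {Ω : Type*} (G : Subgroup (Equiv.Perm Ω)) (ℓ : Set Ω)
    (g : MulAction.stabilizer G ℓ) : Equiv.Perm ℓ :=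
  Equiv.Perm.subtypePerm ((g : G) : Equiv.Perm Ω) (by
    intro x
    have h : (g : G) • ℓ = ℓ := g.2
    constructor
    · intro hx
      have hx2 : ((g : G) : Equiv.Perm Ω) x ∈ (g : G) • ℓ := by rw [h]; exact hx
      obtain ⟨y, hy, hxy⟩ := hx2
      have : y = x := (g : G).1.injective hxy
      rwa [← this]
    · intro hx
      have := Set.smul_mem_smul_set (a := (g : G)) hx
      rw [h] at this
      exact this)

/-- Its range is the permutation group induced on `ℓ` by the setwise stabiliser. -/
def resHom {Ω : Type*} (G : Subgroup (Equiv.Perm Ω)) (ℓ : Set Ω) :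
    MulAction.stabilizer G ℓ →* Equiv.Perm ℓ where
  toFun := inducedPerm G ℓ
  map_one' := by ext x; rfl
  map_mul' g h := by ext x; rfl

namespace MulAction

variable {G α : Type*} [Group G] [MulAction G α]

theorem biInf_stabilizer_eq_fixingSubgroup (s : Set α) :
    ⨅ w ∈ s, stabilizer G w = fixingSubgroup G s := by
  ext g
  simp only [Subgroup.mem_iInf, mem_stabilizer_iff, mem_fixingSubgroup_iff]

theorem fixingSubgroup_setOf_fixingSubgroup_le_stabilizer (s : Set α) :
    fixingSubgroup G {w : α | fixingSubgroup G s ≤ stabilizer G w} = fixingSubgroup G s :=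
  le_antisymm
    (fixingSubgroup_antitone G α fun x hx _ hg => (mem_fixingSubgroup_iff G).mp hg x hx)
    (fun _ hg => (mem_fixingSubgroup_iff G).mpr fun _ hw => hw hg)

theorem stabilizer_le_normalizer_fixingSubgroup (s : Set α) :
    stabilizer G s ≤ Subgroup.normalizer (fixingSubgroup G s : Set G) := fun g hg => by
  rw [Subgroup.mem_normalizer_iff_map_conj_eq, ← MulEquiv.toMonoidHom_eq_coe,
    ← SubMulAction.fixingSubgroup_smul_eq_fixingSubgroup_map_conj, mem_stabilizer_iff.mp hg]

theorem le_stabilizer_smul_of_mem_normalizer {H : Subgroup G} {g : G}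
    (hg : g ∈ Subgroup.normalizer (H : Set G)) {w : α} (hw : H ≤ stabilizer G w) :
    H ≤ stabilizer G (g • w) := fun h hh => by
  have hconj : g⁻¹ * h * g ∈ H := (Subgroup.mem_normalizer_iff''.mp hg h).mp hh
  rw [mem_stabilizer_iff, ← inv_smul_eq_iff, smul_smul, smul_smul,
    mem_stabilizer_iff.mp (hw hconj)]

theorem normalizer_le_stabilizer_setOf_le_stabilizer (H : Subgroup G) :
    Subgroup.normalizer (H : Set G) ≤ stabilizer G {w : α | H ≤ stabilizer G w} := fun g hg => by
  refine mem_stabilizer_iff.mpr (Set.Subset.antisymm ?_ ?_)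
  · exact Set.smul_set_subset_iff.mpr fun _ hw => le_stabilizer_smul_of_mem_normalizer hg hw
  · rw [Set.subset_smul_set_iff]
    exact Set.smul_set_subset_iff.mpr fun _ hw =>
      le_stabilizer_smul_of_mem_normalizer (inv_mem hg) hw

theorem stabilizer_setOf_fixingSubgroup_le_stabilizer (s : Set α) :
    stabilizer G {w : α | fixingSubgroup G s ≤ stabilizer G w} =
      Subgroup.normalizer (fixingSubgroup G s : Set G) := by
  refine le_antisymm ?_ (normalizer_le_stabilizer_setOf_le_stabilizer _)
  simpa only [fixingSubgroup_setOf_fixingSubgroup_le_stabilizer] using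
    stabilizer_le_normalizer_fixingSubgroup (G := G) {w : α | fixingSubgroup G s ≤ stabilizer G w}

end MulAction

theorem ker_resHom {Ω : Type*} (G : Subgroup (Equiv.Perm Ω)) (ℓ : Set Ω) :
    (resHom G ℓ).ker = (fixingSubgroup G ℓ).subgroupOf (MulAction.stabilizer G ℓ) := by
  ext g
  rw [MonoidHom.mem_ker, Subgroup.mem_subgroupOf, mem_fixingSubgroup_iff, Equiv.ext_iff]
  simp only [Subtype.ext_iff, Subtype.forall]
  rfl

theorem nonempty_range_resHom_mulEquiv {Ω : Type*} {G : Subgroup (Equiv.Perm Ω)} {ℓ : Set Ω}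
    {N H : Subgroup G} (hstab : MulAction.stabilizer G ℓ = N) (hfix : fixingSubgroup G ℓ = H)
    [(H.subgroupOf N).Normal] : Nonempty ((resHom G ℓ).range ≃* N ⧸ H.subgroupOf N) := by
  subst hstab hfix
  exact ⟨(QuotientGroup.quotientKerEquivRange _).symm.trans
    (QuotientGroup.quotientMulEquivOfEq (ker_resHom G ℓ))⟩

theorem stmt_11_general {Ω : Type*} (G : Subgroup (Equiv.Perm Ω)) (u v : Ω) :
    (⨅ w ∈ {w : Ω | MulAction.stabilizer G u ⊓ MulAction.stabilizer G v ≤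
        MulAction.stabilizer G w}, MulAction.stabilizer G w) =
      MulAction.stabilizer G u ⊓ MulAction.stabilizer G v ∧
    MulAction.stabilizer G ({w : Ω | MulAction.stabilizer G u ⊓ MulAction.stabilizer G v ≤
        MulAction.stabilizer G w} : Set Ω) =
      Subgroup.normalizer ((MulAction.stabilizer G u ⊓ MulAction.stabilizer G v : Subgroup G) : Set G) ∧
    Nonempty
      ((resHom G {w : Ω | MulAction.stabilizer G u ⊓ MulAction.stabilizer G v ≤
          MulAction.stabilizer G w}).range ≃*
        Subgroup.normalizer ((MulAction.stabilizer G u ⊓ MulAction.stabilizer G v : Subgroup G) : Set G) ⧸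
          (MulAction.stabilizer G u ⊓ MulAction.stabilizer G v).subgroupOf
            (Subgroup.normalizer ((MulAction.stabilizer G u ⊓ MulAction.stabilizer G v : Subgroup G) : Set G))) := by
  have hpair : MulAction.stabilizer G u ⊓ MulAction.stabilizer G v =
      fixingSubgroup G ({u, v} : Set Ω) := by
    rw [← MulAction.biInf_stabilizer_eq_fixingSubgroup, iInf_pair]
  rw [hpair, MulAction.biInf_stabilizer_eq_fixingSubgroup]
  have hfix := MulAction.fixingSubgroup_setOf_fixingSubgroup_le_stabilizer (G := G) {u, v}
  have hstab := MulAction.stabilizer_setOf_fixingSubgroup_le_stabilizer (G := G) {u, v}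
  exact ⟨hfix, hstab, nonempty_range_resHom_mulEquiv hstab hfix⟩

/-- For `ℓ = Λ_{uv} = {w : G_{uv} ≤ G_w}`: (1) the pointwise stabiliser of `ℓ`
equals `G_{uv}`; (2) the setwise stabiliser of `ℓ` equals `N_G(G_{uv})`;
(3) the permutation group induced on `ℓ` by the setwise stabiliser is isomorphic
to `N_G(G_{uv})/G_{uv}`. -/
theorem stmt_11 {Ω : Type*} (G : Subgroup (Equiv.Perm Ω)) (u v : Ω) (huv : u ≠ v) :
    (⨅ w ∈ {w : Ω | MulAction.stabilizer G u ⊓ MulAction.stabilizer G v ≤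
        MulAction.stabilizer G w}, MulAction.stabilizer G w) =
      MulAction.stabilizer G u ⊓ MulAction.stabilizer G v ∧
    MulAction.stabilizer G ({w : Ω | MulAction.stabilizer G u ⊓ MulAction.stabilizer G v ≤
        MulAction.stabilizer G w} : Set Ω) =
      Subgroup.normalizer ((MulAction.stabilizer G u ⊓ MulAction.stabilizer G v : Subgroup G) : Set G) ∧
    Nonempty
      ((resHom G {w : Ω | MulAction.stabilizer G u ⊓ MulAction.stabilizer G v ≤
          MulAction.stabilizer G w}).range ≃*
        Subgroup.normalizer ((MulAction.stabilizer G u ⊓ MulAction.stabilizer G v : Subgroup G) : Set G) ⧸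
          (MulAction.stabilizer G u ⊓ MulAction.stabilizer G v).subgroupOf
            (Subgroup.normalizer ((MulAction.stabilizer G u ⊓ MulAction.stabilizer G v : Subgroup G) : Set G))) :=
  stmt_11_general G u v
end

section
/- Let S be a linear space with a group G ≤ Aut(S) that has Property (★), and suppose (S, G) is transverse (for every flag (u, ℓ) and every orbit Δ of G_u, |ℓ ∩ Δ| ≤ 1). Then S is a refinement of LS(G): every line of S is contained in some line of LS(G), where the line of LS(G) through distinct points u, v is Λ_{uv} = {w : G_{uv} ≤ G_w}. -/
/-- A linear space on point set `Ω`: a set of lines (subsets of `Ω`) such that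
every pair of distinct points lies on exactly one line. -/
structure LinearSpace (Ω : Type*) where
  lines : Set (Set Ω)
  existsUnique_line : ∀ u v : Ω, u ≠ v → ∃! ℓ, ℓ ∈ lines ∧ u ∈ ℓ ∧ v ∈ ℓ

/-- If `G ≤ Aut(S)` has Property (★) and `(S, G)` is transverse, then `S` is a
refinement of `LS(G)`: every line of `S` is contained in some line `Λ_{uv}` of
`LS(G)`. -/
theorem stmt_13 {Ω : Type*} [Nontrivial Ω] (S : LinearSpace Ω)
    (G : Subgroup (Equiv.Perm Ω))
    (hG : ∀ g ∈ G, ∀ ℓ ∈ S.lines, (g : Equiv.Perm Ω) '' ℓ ∈ S.lines)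
    (hstar : ∀ u v w : Ω, u ≠ w →
      MulAction.stabilizer G u ⊓ MulAction.stabilizer G v ≤ MulAction.stabilizer G w →
      MulAction.stabilizer G u ⊓ MulAction.stabilizer G w ≤ MulAction.stabilizer G v)
    (htransverse : ∀ (u : Ω), ∀ ℓ ∈ S.lines, u ∈ ℓ → ∀ v : Ω,
      (ℓ ∩ MulAction.orbit (MulAction.stabilizer G u) v).Subsingleton) :
    ∀ ℓ ∈ S.lines, ∃ u v : Ω, u ≠ v ∧ ℓ ⊆ lineThrough G u v := by

  intro ℓ hℓ
  by_cases h2 : ∃ u ∈ ℓ, ∃ v ∈ ℓ, u ≠ v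
  · obtain ⟨u, hu, v, hv, huv⟩ := h2
    refine ⟨u, v, huv, ?_⟩
    intro w hw g hg
    have hgu : (g : Equiv.Perm Ω) u = u := hg.1
    have hgv : (g : Equiv.Perm Ω) v = v := hg.2
    have hℓ' := hG g g.2 ℓ hℓ
    obtain ⟨m, hm, hmu⟩ := S.existsUnique_line u v huv
    have h1 : (g : Equiv.Perm Ω) '' ℓ = m :=
      hmu _ ⟨hℓ', ⟨u, hu, hgu⟩, ⟨v, hv, hgv⟩⟩
    have h2' : ℓ = m := hmu _ ⟨hℓ, hu, hv⟩
    have hgwℓ : (g : Equiv.Perm Ω) w ∈ ℓ := by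
      rw [h2', ← h1]; exact ⟨w, hw, rfl⟩
    have horb : (g : Equiv.Perm Ω) w ∈ MulAction.orbit (MulAction.stabilizer G u) w :=
      ⟨⟨g, hg.1⟩, rfl⟩
    exact htransverse u ℓ hℓ hu w ⟨hgwℓ, horb⟩ ⟨hw, MulAction.mem_orbit_self w⟩
  · push_neg at h2
    rcases Set.eq_empty_or_nonempty ℓ with he | ⟨w, hw⟩
    · obtain ⟨u, v, huv⟩ := exists_pair_ne Ω
      exact ⟨u, v, huv, by simp [he]⟩
    · obtain ⟨v, hv⟩ := exists_ne w
      refine ⟨w, v, (Ne.symm hv), fun x hx => ?_⟩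
      have : x = w := h2 x hx w hw
      subst this
      exact fun g hg => hg.1
end

section
/- Let S = (P, L) be a linear space with G ≤ Aut(S) transitive on L, fix a line ℓ ∈ L, and let T = (P(ℓ), TL) be a linear space on the point set of ℓ whose line set TL is invariant under the permutation group induced on ℓ by the setwise stabiliser G_ℓ. Define R to be the incidence structure with point set P and line set {t^g : t ∈ TL, g ∈ G}. Then R is a linear space, R is a refinement of S (every line of R is contained in a line of S), and G ≤ Aut(R). -/
/-- Construction 5.1: given a line-transitive linear space `S`, a line `ℓ`, and a
linear space `T` on the points of `ℓ` whose line set `TL` is invariant under the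
group induced on `ℓ` by the setwise stabiliser `G_ℓ`, the translates of the lines
of `T` under `G` form a linear space `R` refining `S`, with `G ≤ Aut(R)`. -/
theorem stmt_14 {Ω : Type*} (S : LinearSpace Ω) (G : Subgroup (Equiv.Perm Ω))
    (hG : ∀ g ∈ G, ∀ m ∈ S.lines, (g : Equiv.Perm Ω) '' m ∈ S.lines)
    (hlinetrans : ∀ m₁ ∈ S.lines, ∀ m₂ ∈ S.lines,
      ∃ g ∈ G, (g : Equiv.Perm Ω) '' m₁ = m₂)
    (ℓ : Set Ω) (hℓ : ℓ ∈ S.lines)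
    (TL : Set (Set Ω))
    (hTLsub : ∀ t ∈ TL, t ⊆ ℓ)
    (hT : ∀ u v : Ω, u ∈ ℓ → v ∈ ℓ → u ≠ v → ∃! t, t ∈ TL ∧ u ∈ t ∧ v ∈ t)
    (hTinv : ∀ g ∈ G, (g : Equiv.Perm Ω) '' ℓ = ℓ →
      ∀ t ∈ TL, (g : Equiv.Perm Ω) '' t ∈ TL) :
    (∀ u v : Ω, u ≠ v →
      ∃! s, s ∈ {s : Set Ω | ∃ t ∈ TL, ∃ g ∈ G, (g : Equiv.Perm Ω) '' t = s} ∧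
        u ∈ s ∧ v ∈ s) ∧
    (∀ s ∈ {s : Set Ω | ∃ t ∈ TL, ∃ g ∈ G, (g : Equiv.Perm Ω) '' t = s},
      ∃ m ∈ S.lines, s ⊆ m) ∧
    (∀ g ∈ G, ∀ s ∈ {s : Set Ω | ∃ t ∈ TL, ∃ g ∈ G, (g : Equiv.Perm Ω) '' t = s},
      (g : Equiv.Perm Ω) '' s ∈ {s : Set Ω | ∃ t ∈ TL, ∃ g ∈ G, (g : Equiv.Perm Ω) '' t = s}) := by
  refine ⟨?_, ?_, ?_⟩
  · intro u v huv
    -- the unique S-line through u, v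
    obtain ⟨m, ⟨hm, hum, hvm⟩, hmuniq⟩ := S.existsUnique_line u v huv
    obtain ⟨g, hgG, hgℓ⟩ := hlinetrans ℓ hℓ m hm
    -- pull back u, v
    have huℓ : (g : Equiv.Perm Ω)⁻¹ u ∈ ℓ := by
      rw [← hgℓ] at hum
      obtain ⟨x, hx, hxe⟩ := hum
      simpa [← hxe] using hx
    have hvℓ : (g : Equiv.Perm Ω)⁻¹ v ∈ ℓ := by
      rw [← hgℓ] at hvm
      obtain ⟨x, hx, hxe⟩ := hvm
      simpa [← hxe] using hx
    have hne : (g : Equiv.Perm Ω)⁻¹ u ≠ (g : Equiv.Perm Ω)⁻¹ v := by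
      simpa using huv
    obtain ⟨t, ⟨htTL, hut, hvt⟩, htuniq⟩ := hT _ _ huℓ hvℓ hne
    refine ⟨(g : Equiv.Perm Ω) '' t, ⟨⟨t, htTL, g, hgG, rfl⟩, ?_, ?_⟩, ?_⟩
    · exact ⟨_, hut, by simp⟩
    · exact ⟨_, hvt, by simp⟩
    · rintro s ⟨⟨t', ht'TL, g', hg'G, rfl⟩, hus, hvs⟩
      -- g' '' ℓ is an S-line containing u, v, hence equals m = g '' ℓ
      have hℓ' : (g' : Equiv.Perm Ω) '' ℓ = (g : Equiv.Perm Ω) '' ℓ := by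
        rw [hgℓ]
        refine hmuniq _ ⟨hG g' hg'G ℓ hℓ, ?_, ?_⟩
        · exact Set.image_mono (hTLsub t' ht'TL) hus
        · exact Set.image_mono (hTLsub t' ht'TL) hvs
      -- h := g⁻¹ * g' stabilises ℓ
      set h : Equiv.Perm Ω := (g : Equiv.Perm Ω)⁻¹ * (g' : Equiv.Perm Ω) with hh
      have hhG : h ∈ G := by
        exact mul_mem (inv_mem hgG) hg'G
      have hhℓ : (h : Equiv.Perm Ω) '' ℓ = ℓ := by
        have e1 : (h : Equiv.Perm Ω) '' ℓ = ⇑g⁻¹ '' (⇑g' '' ℓ) := by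
          rw [hh, ← Set.image_comp]; rfl
        rw [e1, hℓ', ← Set.image_comp]
        simp
      have hht' : (h : Equiv.Perm Ω) '' t' ∈ TL := hTinv h hhG hhℓ t' ht'TL
      have hut' : (g : Equiv.Perm Ω)⁻¹ u ∈ h '' t' := by
        obtain ⟨x, hx, hxe⟩ := hus
        exact ⟨x, hx, by simp [hh, ← hxe]⟩
      have hvt' : (g : Equiv.Perm Ω)⁻¹ v ∈ h '' t' := by
        obtain ⟨x, hx, hxe⟩ := hvs
        exact ⟨x, hx, by simp [hh, ← hxe]⟩
      have := htuniq (h '' t') ⟨hht', hut', hvt'⟩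
      calc (g' : Equiv.Perm Ω) '' t' = (g : Equiv.Perm Ω) '' (h '' t') := by
            rw [hh, ← Set.image_comp]; ext x; simp
        _ = (g : Equiv.Perm Ω) '' t := by rw [this]
  · rintro s ⟨t, htTL, g, hgG, rfl⟩
    exact ⟨(g : Equiv.Perm Ω) '' ℓ, hG g hgG ℓ hℓ, Set.image_mono (hTLsub t htTL)⟩
  · rintro g hgG s ⟨t, htTL, g', hg'G, rfl⟩
    exact ⟨t, htTL, g * g', mul_mem hgG hg'G, by rw [← Set.image_comp]; rfl⟩
end

section
/- Let S = (P, L) be a linear space with G ≤ Aut(S) transitive on L and fix ℓ ∈ L. If R = (P, RL) is any refinement of S with G ≤ Aut(R), then, setting TL = {k ∈ RL : k ⊆ ℓ}, the pair T = (P(ℓ), TL) is a linear space on the points of ℓ, TL is invariant under the action induced on ℓ by the setwise stabiliser G_ℓ, and RL = {t^g : t ∈ TL, g ∈ G}. -/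
/-- If `R` is any refinement of a line-transitive linear space `S` with
`G ≤ Aut(R)`, then `TL = {k ∈ RL : k ⊆ ℓ}` is the line set of a linear space on
the points of `ℓ`, it is invariant under the action induced on `ℓ` by `G_ℓ`, and
`RL = {t^g : t ∈ TL, g ∈ G}`. -/
theorem stmt_15 {Ω : Type*} (S : LinearSpace Ω) (G : Subgroup (Equiv.Perm Ω))
    (hG : ∀ g ∈ G, ∀ m ∈ S.lines, (g : Equiv.Perm Ω) '' m ∈ S.lines)
    (hlinetrans : ∀ m₁ ∈ S.lines, ∀ m₂ ∈ S.lines,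
      ∃ g ∈ G, (g : Equiv.Perm Ω) '' m₁ = m₂)
    (ℓ : Set Ω) (hℓ : ℓ ∈ S.lines)
    (R : LinearSpace Ω)
    (hRref : ∀ k ∈ R.lines, ∃ m ∈ S.lines, k ⊆ m)
    (hGR : ∀ g ∈ G, ∀ k ∈ R.lines, (g : Equiv.Perm Ω) '' k ∈ R.lines) :
    (∀ u v : Ω, u ∈ ℓ → v ∈ ℓ → u ≠ v →
      ∃! t, t ∈ {k ∈ R.lines | k ⊆ ℓ} ∧ u ∈ t ∧ v ∈ t) ∧
    (∀ g ∈ G, (g : Equiv.Perm Ω) '' ℓ = ℓ →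
      ∀ t ∈ {k ∈ R.lines | k ⊆ ℓ}, (g : Equiv.Perm Ω) '' t ∈ {k ∈ R.lines | k ⊆ ℓ}) ∧
    R.lines = {s : Set Ω | ∃ t ∈ {k ∈ R.lines | k ⊆ ℓ}, ∃ g ∈ G,
      (g : Equiv.Perm Ω) '' t = s} := by
  refine ⟨?_, ?_, ?_⟩
  · intro u v hu hv huv
    obtain ⟨t, ⟨htR, htu, htv⟩, huniq⟩ := R.existsUnique_line u v huv
    have htℓ : t ⊆ ℓ := by
      obtain ⟨m, hm, htm⟩ := hRref t htR
      obtain ⟨m', hm'⟩ := S.existsUnique_line u v huv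
      have h1 : m = m' := hm'.2 m ⟨hm, htm htu, htm htv⟩
      have h2 : ℓ = m' := hm'.2 ℓ ⟨hℓ, hu, hv⟩
      rw [h1, ← h2] at htm; exact htm
    exact ⟨t, ⟨⟨htR, htℓ⟩, htu, htv⟩, fun t' ht' => huniq t' ⟨ht'.1.1, ht'.2⟩⟩
  · intro g hg hgℓ t ht
    exact ⟨hGR g hg t ht.1, (Set.image_mono ht.2).trans hgℓ.le⟩
  · ext k
    constructor
    · intro hk
      obtain ⟨m, hm, hkm⟩ := hRref k hk
      obtain ⟨g, hg, hgm⟩ := hlinetrans m hm ℓ hℓ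
      refine ⟨(g : Equiv.Perm Ω) '' k, ⟨hGR g hg k hk, hgm ▸ Set.image_mono hkm⟩,
        g⁻¹, inv_mem hg, ?_⟩
      simp [← Set.image_comp]
    · rintro ⟨t, ht, g, hg, rfl⟩
      exact hGR g hg t ht.1
end
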